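/- Let p ≡ 7 (mod 8) be a prime. Over F_p, the polynomials G^{((5p-3)/8)}(1/4, 3/8, 9/8 | λ) and (1-λ)^{(p+1)/2} · G^{((p-7)/8)}(3/4, 7/8, 9/8 | λ) are equal. -/
import Mathlib


/-- The Pochhammer symbol `(x;ℓ) = x(x+1)⋯(x+ℓ-1)` in a field `K`. -/
noncomputable def poch {K : Type*} [Field K] (x : K) (ℓ : ℕ) : K :=
  ∏ i ∈ Finset.range ℓ, (x + (i : K))

/-- The truncated Gaussian hypergeometric series `G^(d)(a,b,c | z)` as a
polynomial in `z`: `Σ_{ℓ=0}^d ((a;ℓ)(b;ℓ))/((c;ℓ)(1;ℓ)) z^ℓ`. -/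
noncomputable def Gpoly {K : Type*} [Field K] (d : ℕ) (a b c : K) : Polynomial K :=
  ∑ ℓ ∈ Finset.range (d + 1),
    Polynomial.C (poch a ℓ * poch b ℓ / (poch c ℓ * poch 1 ℓ)) * Polynomial.X ^ ℓ

open Polynomial

variable {K : Type*} [Field K]

lemma poch_zero (x : K) : poch x 0 = 1 := by simp [poch]

lemma poch_succ (x : K) (n : ℕ) : poch x (n + 1) = poch x n * (x + n) := by
  simp [poch, Finset.prod_range_succ]

/-- coefficient of the truncated hypergeometric polynomial -/
noncomputable def ucoef (a b c : K) (n : ℕ) : K :=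
  poch a n * poch b n / (poch c n * poch 1 n)

lemma coeff_gpoly (d : ℕ) (a b c : K) (n : ℕ) :
    (Gpoly d a b c).coeff n = if n ≤ d then ucoef a b c n else 0 := by
  rw [Gpoly, Polynomial.finset_sum_coeff]
  simp only [Polynomial.coeff_C_mul, Polynomial.coeff_X_pow, mul_ite, mul_one, mul_zero]
  rw [Finset.sum_ite_eq (Finset.range (d + 1)) n]
  simp [Finset.mem_range, Nat.lt_succ_iff, ucoef]

/-- The hypergeometric differential operator. -/
noncomputable def Lop (a b c : K) (y : K[X]) : K[X] :=
  X * (1 - X) * derivative (derivative y)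
    + (C c - C (a + b + 1) * X) * derivative y - C (a * b) * y

lemma coeff_Lop (a b c : K) (y : K[X]) (n : ℕ) :
    (Lop a b c y).coeff n =
      ((n : K) + 1) * ((n : K) + c) * y.coeff (n + 1)
        - ((n : K) + a) * ((n : K) + b) * y.coeff n := by
  have h : Lop a b c y =
      derivative (derivative y) * X ^ 1 - derivative (derivative y) * X ^ 2
        + C c * derivative y - (C (a + b + 1) * derivative y) * X ^ 1 - C (a * b) * y := by
    unfold Lop; ring
  rw [h]
  rcases n with _ | _ | m <;>
    · simp only [coeff_add, coeff_sub, coeff_mul_X_pow', coeff_C_mul, coeff_derivative]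
      norm_num
      try (push_cast; ring)

lemma ucoef_rec (a b c : K) (n : ℕ) (h1 : poch c (n + 1) ≠ 0) (h2 : poch (1:K) (n + 1) ≠ 0) :
    ((n : K) + 1) * ((n : K) + c) * ucoef a b c (n + 1)
      = ((n : K) + a) * ((n : K) + b) * ucoef a b c n := by
  rw [poch_succ] at h1 h2
  have hc : poch c n ≠ 0 := left_ne_zero_of_mul h1
  have hcn : c + (n : K) ≠ 0 := right_ne_zero_of_mul h1
  have h1' : poch (1:K) n ≠ 0 := left_ne_zero_of_mul h2
  have h1n : (1 : K) + (n : K) ≠ 0 := right_ne_zero_of_mul h2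
  unfold ucoef
  rw [poch_succ, poch_succ, poch_succ, poch_succ]
  field_simp
  ring

lemma Lop_gpoly_zero (a b c : K) (d : ℕ) (hb : b + (d : K) = 0)
    (hden : ∀ n, n ≤ d → poch c n ≠ 0 ∧ poch (1:K) n ≠ 0) :
    Lop a b c (Gpoly d a b c) = 0 := by
  ext n
  rw [coeff_Lop, coeff_gpoly, coeff_gpoly, Polynomial.coeff_zero]
  rcases lt_trichotomy n d with h | h | h
  · rw [if_pos (by omega : n + 1 ≤ d), if_pos (le_of_lt h),
      ucoef_rec a b c n (hden (n+1) (by omega)).1 (hden (n+1) (by omega)).2, sub_self]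
  · subst h
    rw [if_neg (by omega), if_pos le_rfl]
    have : (n : K) + b = 0 := by rw [add_comm]; exact hb
    rw [this]
    ring
  · rw [if_neg (by omega), if_neg (by omega)]
    ring

lemma Lop_comm (a b c : K) (y : K[X]) : Lop a b c y = Lop b a c y := by
  unfold Lop
  rw [add_comm a b, mul_comm a b]

/-- Euler's transformation at the level of the differential operator. -/
lemma Lop_euler (a b c : K) (f : ℕ) (he : ((f : K) + 2) = c - a - b) (Q : K[X]) :
    Lop a b c ((1 - X) ^ (f + 2) * Q) = (1 - X) ^ (f + 2) * Lop (c - a) (c - b) c Q := by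
  have hS : derivative (1 - X : K[X]) = -1 := by simp
  have hcast2 : ((f + 2 : ℕ) : K) = (f : K) + 2 := by push_cast; ring
  have hcast1 : ((f + 1 : ℕ) : K) = (f : K) + 1 := by push_cast; ring
  have hd1 : derivative ((1 - X : K[X]) ^ (f + 2) * Q)
      = (1 - X) ^ (f + 1) * ((1 - X) * derivative Q - C ((f : K) + 2) * Q) := by
    rw [derivative_mul, derivative_pow, hS]
    rw [show f + 2 - 1 = f + 1 from rfl, hcast2]
    ring
  have hd2 : derivative ((1 - X : K[X]) ^ (f + 1) * ((1 - X) * derivative Q - C ((f : K) + 2) * Q))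
      = (1 - X) ^ f * ((1 - X) ^ 2 * derivative (derivative Q)
          - 2 * C ((f : K) + 2) * (1 - X) * derivative Q
          + (C ((f : K) + 2) * (C ((f : K) + 2) - 1)) * Q) := by
    rw [derivative_mul, derivative_pow, hS, derivative_sub, derivative_mul, derivative_mul, hS,
      derivative_C]
    rw [show f + 1 - 1 = f from rfl, hcast1]
    have : C ((f : K) + 1) = C ((f : K) + 2) - 1 := by
      simp [C_add, map_ofNat, C_1]; ring
    rw [this]
    ring
  unfold Lop
  rw [hd1, hd2, he]
  simp only [map_sub, map_add, map_mul, map_one, C_1]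
  ring

lemma eq_of_Lop (a b c : K) (D : ℕ) (P W : K[X])
    (hP : Lop a b c P = 0) (hW : Lop a b c W = 0)
    (h0 : P.coeff 0 = W.coeff 0)
    (hdP : ∀ n, D < n → P.coeff n = 0) (hdW : ∀ n, D < n → W.coeff n = 0)
    (hnz : ∀ n : ℕ, n < D → ((n : K) + 1) * ((n : K) + c) ≠ 0) : P = W := by
  ext n
  induction n with
  | zero => exact h0
  | succ n ih =>
    by_cases h : D < n + 1
    · rw [hdP _ h, hdW _ h]
    · have hn : n < D := by omega
      have e1 : (Lop a b c P).coeff n = 0 := by rw [hP]; simp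
      have e2 : (Lop a b c W).coeff n = 0 := by rw [hW]; simp
      rw [coeff_Lop, sub_eq_zero] at e1 e2
      rw [ih] at e1
      exact mul_left_cancel₀ (hnz n hn) (e1.trans e2.symm)

lemma gpoly_natDegree_le (d : ℕ) (a b c : K) : (Gpoly d a b c).natDegree ≤ d := by
  apply Polynomial.natDegree_sum_le_of_forall_le
  intro i hi
  refine le_trans (Polynomial.natDegree_C_mul_le _ _) ?_
  simp [Polynomial.natDegree_X_pow]
  simp [Finset.mem_range, Nat.lt_succ_iff] at hi
  exact hi

lemma gpoly_coeff_zero (d : ℕ) (a b c : K) : (Gpoly d a b c).coeff 0 = 1 := by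
  rw [coeff_gpoly, if_pos (Nat.zero_le d)]
  simp [ucoef, poch_zero]

lemma poch_natCast_ne_zero (p : ℕ) [Fact p.Prime] (m n : ℕ) (h0 : 0 < m) (h : m + n ≤ p) :
    poch ((m : ℕ) : ZMod p) n ≠ 0 := by
  induction n with
  | zero => rw [poch_zero]; exact one_ne_zero
  | succ n ih =>
    rw [poch_succ]
    refine mul_ne_zero (ih (by omega)) ?_
    have : ((m : ZMod p) + (n : ZMod p)) = ((m + n : ℕ) : ZMod p) := by push_cast; ring
    rw [this]
    rw [Ne, ZMod.natCast_eq_zero_iff]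
    intro hdvd
    have hlt : m + n < p := by omega
    have hpos : 0 < m + n := by omega
    have := Nat.le_of_dvd hpos hdvd
    omega

theorem Gpoly_euler_transform_seven_mod_eight
    (p : ℕ) [Fact p.Prime] (hp8 : p % 8 = 7) :
    Gpoly ((5 * p - 3) / 8) ((1 : ZMod p) / 4) ((3 : ZMod p) / 8) ((9 : ZMod p) / 8) =
      (1 - Polynomial.X) ^ ((p + 1) / 2) *
        Gpoly ((p - 7) / 8) ((3 : ZMod p) / 4) ((7 : ZMod p) / 8)
          ((9 : ZMod p) / 8) := by
  obtain ⟨k, hk⟩ : ∃ k, p = 8 * k + 7 := ⟨p / 8, by omega⟩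
  have hD1 : (5 * p - 3) / 8 = 5 * k + 4 := by omega
  have hE : (p + 1) / 2 = 4 * k + 4 := by omega
  have hD2 : (p - 7) / 8 = k := by omega
  rw [hD1, hE, hD2]
  have hp7 : ((8 * k + 7 : ℕ) : ZMod p) = 0 := by rw [← hk]; exact ZMod.natCast_self p
  have h8 : (8 : ZMod p) ≠ 0 := by
    have h : (8 : ZMod p) = ((8 : ℕ) : ZMod p) := by norm_num
    rw [h, Ne, ZMod.natCast_eq_zero_iff]
    intro hdvd
    have := Nat.le_of_dvd (by norm_num) hdvd
    have h7 : p = 7 := by omega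
    rw [h7] at hdvd; norm_num at hdvd
  have h4 : (4 : ZMod p) ≠ 0 := by
    intro h; exact h8 (by rw [show (8 : ZMod p) = 4 * 2 by norm_num, h, zero_mul])
  have hc : (9 : ZMod p) / 8 = ((k + 2 : ℕ) : ZMod p) := by
    rw [div_eq_iff h8, eq_comm]
    have : ((k + 2 : ℕ) : ZMod p) * 8 = ((8 * k + 7 : ℕ) : ZMod p) + 9 := by push_cast; ring
    rw [this, hp7, zero_add]
  have ha : (1 : ZMod p) / 4 = ((2 * k + 2 : ℕ) : ZMod p) := by
    rw [div_eq_iff h4, eq_comm]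
    have : ((2 * k + 2 : ℕ) : ZMod p) * 4 = ((8 * k + 7 : ℕ) : ZMod p) + 1 := by push_cast; ring
    rw [this, hp7, zero_add]
  have hb : (3 : ZMod p) / 8 = -(((5 * k + 4 : ℕ)) : ZMod p) := by
    rw [div_eq_iff h8, eq_comm]
    have : -(((5 * k + 4 : ℕ)) : ZMod p) * 8 = 3 - 5 * ((8 * k + 7 : ℕ) : ZMod p) := by
      push_cast; ring
    rw [this, hp7]; ring
  have hb' : (7 : ZMod p) / 8 = -((k : ℕ) : ZMod p) := by
    rw [div_eq_iff h8, eq_comm]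
    have : -((k : ℕ) : ZMod p) * 8 = 7 - ((8 * k + 7 : ℕ) : ZMod p) := by push_cast; ring
    rw [this, hp7]; ring
  have hca : (9 : ZMod p) / 8 - 1 / 4 = 7 / 8 := by field_simp; ring
  have hcb : (9 : ZMod p) / 8 - 3 / 8 = 3 / 4 := by field_simp; ring
  have hee : ((4 * k + 2 : ℕ) : ZMod p) + 2 =
      (9 : ZMod p) / 8 - (1 : ZMod p) / 4 - (3 : ZMod p) / 8 := by
    rw [hc, ha, hb]; push_cast; ring
  have hden : ∀ n, n ≤ 5 * k + 4 →
      poch ((9 : ZMod p) / 8) n ≠ 0 ∧ poch (1 : ZMod p) n ≠ 0 := by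
    intro n hn
    constructor
    · rw [hc]; exact poch_natCast_ne_zero p (k + 2) n (by omega) (by omega)
    · have h1 : (1 : ZMod p) = ((1 : ℕ) : ZMod p) := by norm_num
      rw [h1]; exact poch_natCast_ne_zero p 1 n (by omega) (by omega)
  have hP : Lop ((1 : ZMod p) / 4) ((3 : ZMod p) / 8) ((9 : ZMod p) / 8)
      (Gpoly (5 * k + 4) ((1 : ZMod p) / 4) ((3 : ZMod p) / 8) ((9 : ZMod p) / 8)) = 0 := by
    apply Lop_gpoly_zero
    · rw [hb]; ring
    · exact hden
  have hQ : Lop ((3 : ZMod p) / 4) ((7 : ZMod p) / 8) ((9 : ZMod p) / 8)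
      (Gpoly k ((3 : ZMod p) / 4) ((7 : ZMod p) / 8) ((9 : ZMod p) / 8)) = 0 := by
    apply Lop_gpoly_zero
    · rw [hb']; ring
    · intro n hn; exact hden n (by omega)
  have hW : Lop ((1 : ZMod p) / 4) ((3 : ZMod p) / 8) ((9 : ZMod p) / 8)
      ((1 - Polynomial.X) ^ (4 * k + 4) *
        Gpoly k ((3 : ZMod p) / 4) ((7 : ZMod p) / 8) ((9 : ZMod p) / 8)) = 0 := by
    rw [show 4 * k + 4 = (4 * k + 2) + 2 by ring]
    rw [Lop_euler _ _ _ (4 * k + 2) hee]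
    rw [hca, hcb, Lop_comm, hQ, mul_zero]
  have h0 : (Gpoly (5 * k + 4) ((1 : ZMod p) / 4) ((3 : ZMod p) / 8)
        ((9 : ZMod p) / 8)).coeff 0 =
      ((1 - Polynomial.X) ^ (4 * k + 4) *
        Gpoly k ((3 : ZMod p) / 4) ((7 : ZMod p) / 8) ((9 : ZMod p) / 8)).coeff 0 := by
    rw [gpoly_coeff_zero, Polynomial.mul_coeff_zero, gpoly_coeff_zero]
    have h1 : ((1 - Polynomial.X : (ZMod p)[X]) ^ (4 * k + 4)).coeff 0 = 1 := by
      rw [Polynomial.coeff_zero_eq_eval_zero]; simp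
    rw [h1, mul_one]
  have hdP : ∀ n, 5 * k + 4 < n →
      (Gpoly (5 * k + 4) ((1 : ZMod p) / 4) ((3 : ZMod p) / 8)
        ((9 : ZMod p) / 8)).coeff n = 0 := by
    intro n hn; rw [coeff_gpoly, if_neg (by omega)]
  have hdW : ∀ n, 5 * k + 4 < n →
      ((1 - Polynomial.X) ^ (4 * k + 4) *
        Gpoly k ((3 : ZMod p) / 4) ((7 : ZMod p) / 8) ((9 : ZMod p) / 8)).coeff n = 0 := by
    have hdeg : ((1 - Polynomial.X) ^ (4 * k + 4) *
        Gpoly k ((3 : ZMod p) / 4) ((7 : ZMod p) / 8) ((9 : ZMod p) / 8)).natDegree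
          ≤ 5 * k + 4 := by
      refine le_trans (Polynomial.natDegree_mul_le) ?_
      have hx : ((1 - Polynomial.X : (ZMod p)[X]) ^ (4 * k + 4)).natDegree ≤ 4 * k + 4 := by
        refine le_trans (Polynomial.natDegree_pow_le) ?_
        have : (1 - Polynomial.X : (ZMod p)[X]).natDegree ≤ 1 := by
          refine le_trans (Polynomial.natDegree_sub_le _ _) ?_
          simp
        calc (4 * k + 4) * (1 - Polynomial.X : (ZMod p)[X]).natDegree
            ≤ (4 * k + 4) * 1 := Nat.mul_le_mul_left _ this
          _ = 4 * k + 4 := by ring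
      have hy := gpoly_natDegree_le k ((3 : ZMod p) / 4) ((7 : ZMod p) / 8) ((9 : ZMod p) / 8)
      omega
    intro n hn
    exact Polynomial.coeff_eq_zero_of_natDegree_lt (lt_of_le_of_lt hdeg hn)
  have hnz : ∀ n : ℕ, n < 5 * k + 4 →
      ((n : ZMod p) + 1) * ((n : ZMod p) + (9 : ZMod p) / 8) ≠ 0 := by
    intro n hn
    apply mul_ne_zero
    · have h1 : ((n : ZMod p) + 1) = ((n + 1 : ℕ) : ZMod p) := by push_cast; ring
      rw [h1, Ne, ZMod.natCast_eq_zero_iff]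
      intro hd
      have := Nat.le_of_dvd (by omega) hd
      omega
    · rw [hc]
      have h1 : ((n : ZMod p) + ((k + 2 : ℕ) : ZMod p)) = ((n + k + 2 : ℕ) : ZMod p) := by
        push_cast; ring
      rw [h1, Ne, ZMod.natCast_eq_zero_iff]
      intro hd
      have := Nat.le_of_dvd (by omega) hd
      omega
  exact eq_of_Lop ((1 : ZMod p) / 4) ((3 : ZMod p) / 8) ((9 : ZMod p) / 8) (5 * k + 4)
    _ _ hP hW h0 hdP hdW hnz
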